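/- arXiv:0712.1329 — 3 statements merged into one kernel-verified Lean document; each statement's English description precedes it below -/
import Mathlib

section
/- Let n ≥ 1 be an integer, R : ℝⁿ → ℝ a function, Λ ≤ 0 a real number, and let u : ℝⁿ → ℝ be a C² positive function satisfying 4Δu − Ru + 2u·ln u + Λu = 0 on ℝⁿ. Then for every real p ≥ 1, the pointwise differential inequality −4Δ(u^p) + p·R·u^p ≤ 2p·u^p·ln u holds on ℝⁿ. -/
open MeasureTheory Real

/-- The Euclidean Laplacian: the trace of the Hessian. -/
noncomputable def lap {n : ℕ} (u : EuclideanSpace ℝ (Fin n) → ℝ)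
    (x : EuclideanSpace ℝ (Fin n)) : ℝ :=
  ∑ i : Fin n, iteratedFDeriv ℝ 2 u x ![EuclideanSpace.single i 1, EuclideanSpace.single i 1]

/-- Inequality (2.3): powers of a positive solution of the nonlinear eigenvalue
equation are subsolutions of the corresponding linear inequality. -/
theorem stmt3 (n : ℕ) (hn : 1 ≤ n)
    (R : EuclideanSpace ℝ (Fin n) → ℝ) (Λ : ℝ) (hΛ : Λ ≤ 0)
    (u : EuclideanSpace ℝ (Fin n) → ℝ) (hu : ContDiff ℝ 2 u) (hupos : ∀ x, 0 < u x)
    (hpde : ∀ x, 4 * lap u x - R x * u x + 2 * u x * Real.log (u x) + Λ * u x = 0) :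
    ∀ p : ℝ, 1 ≤ p → ∀ x,
      -4 * lap (fun y => u y ^ p) x + p * R x * u x ^ p
        ≤ 2 * p * u x ^ p * Real.log (u x) := by
  intro p hp x
  have hud : Differentiable ℝ u := hu.differentiable (by norm_num)
  -- fderiv of u^p
  have hg' : ∀ y, HasFDerivAt (fun y => u y ^ p)
      ((p * u y ^ (p - 1)) • fderiv ℝ u y) y := fun y =>
    (hud y).hasFDerivAt.rpow_const (Or.inl (hupos y).ne')
  have hgfd : fderiv ℝ (fun y => u y ^ p) =
      fun y => (p * u y ^ (p - 1)) • fderiv ℝ u y :=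
    funext fun y => (hg' y).fderiv
  -- fderiv u is differentiable
  have hfu : Differentiable ℝ (fderiv ℝ u) :=
    (hu.fderiv_right (m := 1) (by norm_num)).differentiable (by norm_num)
  -- derivative of the coefficient
  have hc : HasFDerivAt (fun y => p * u y ^ (p - 1))
      (p • (((p - 1) * u x ^ (p - 1 - 1)) • fderiv ℝ u x)) x :=
    ((hud x).hasFDerivAt.rpow_const (Or.inl (hupos x).ne')).const_mul p
  have h2 : HasFDerivAt (fun y => (p * u y ^ (p - 1)) • fderiv ℝ u y)
      ((p * u x ^ (p - 1)) • fderiv ℝ (fderiv ℝ u) x +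
        (p • (((p - 1) * u x ^ (p - 1 - 1)) • fderiv ℝ u x)).smulRight (fderiv ℝ u x)) x :=
    hc.smul (hfu x).hasFDerivAt
  have hsnd : fderiv ℝ (fderiv ℝ (fun y => u y ^ p)) x =
      (p * u x ^ (p - 1)) • fderiv ℝ (fderiv ℝ u) x +
        (p • (((p - 1) * u x ^ (p - 1 - 1)) • fderiv ℝ u x)).smulRight (fderiv ℝ u x) := by
    rw [hgfd]; exact h2.fderiv
  -- compute the Laplacian of u^p
  have hlap : lap (fun y => u y ^ p) x =
      (p * u x ^ (p - 1)) * lap u x +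
        p * ((p - 1) * u x ^ (p - 1 - 1)) *
          ∑ i : Fin n, (fderiv ℝ u x (EuclideanSpace.single i 1)) ^ 2 := by
    unfold lap
    simp only [iteratedFDeriv_two_apply, hsnd]
    simp only [ContinuousLinearMap.add_apply, ContinuousLinearMap.smul_apply,
      ContinuousLinearMap.smulRight_apply, smul_eq_mul, Matrix.cons_val_zero,
      Matrix.cons_val_one, Matrix.head_cons]
    rw [Finset.sum_add_distrib, Finset.mul_sum, Finset.mul_sum]
    congr 1
    apply Finset.sum_congr rfl
    intro i _
    ring
  have hD : 0 ≤ ∑ i : Fin n, (fderiv ℝ u x (EuclideanSpace.single i 1)) ^ 2 :=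
    Finset.sum_nonneg fun i _ => sq_nonneg _
  have hux := hupos x
  have h1 : u x ^ (p - 1) * u x = u x ^ p := by
    rw [← Real.rpow_add_one hux.ne' (p - 1)]
    norm_num
  have h2' : (0:ℝ) ≤ u x ^ (p - 1 - 1) := (Real.rpow_pos_of_pos hux _).le
  have hup : (0:ℝ) < u x ^ p := Real.rpow_pos_of_pos hux _
  have hup1 : (0:ℝ) < u x ^ (p - 1) := Real.rpow_pos_of_pos hux _
  have hpde' := hpde x
  have hS := hD
  set S := ∑ i : Fin n, (fderiv ℝ u x (EuclideanSpace.single i 1)) ^ 2 with hSdef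
  have key : -4 * (p * u x ^ (p - 1) * lap u x + p * ((p - 1) * u x ^ (p - 1 - 1)) * S)
      + p * R x * u x ^ p
      = 2 * p * u x ^ p * Real.log (u x) + p * Λ * u x ^ p
        - 4 * (p * ((p - 1) * u x ^ (p - 1 - 1)) * S) := by
    linear_combination (-(p * u x ^ (p - 1))) * hpde'
      + (-(p * R x) + 2 * p * Real.log (u x) + p * Λ) * h1
  have hK : 0 ≤ p * ((p - 1) * u x ^ (p - 1 - 1)) * S :=
    mul_nonneg (mul_nonneg (by linarith) (mul_nonneg (by linarith) h2')) hS
  have hΛt : p * Λ * u x ^ p ≤ 0 :=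
    mul_nonpos_of_nonpos_of_nonneg (mul_nonpos_of_nonneg_of_nonpos (by linarith) hΛ) hup.le
  rw [hlap, key]
  linarith
end

section
/- Let n ≥ 1 be an integer, p ≥ 1 a real number, R : ℝⁿ → ℝ continuous, u : ℝⁿ → ℝ smooth and positive, and let w : ℝⁿ → ℝ be a smooth nonnegative function satisfying the pointwise inequality −4Δw + p·R·w ≤ 2p·w·ln u on ℝⁿ. Let φ : ℝⁿ → ℝ be smooth and compactly supported with 0 ≤ φ ≤ 1 and with R ≥ 0 on the support of φ. Then 4∫ |∇(wφ)|² dx + ∫ R·(wφ)² dx ≤ 4∫ |∇φ|²·w² dx + p·∫ (wφ)²·ln(u²) dx. -/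
open MeasureTheory Real

set_option maxHeartbeats 1000000

section helpers
variable {n : ℕ}
local notation "E" => EuclideanSpace ℝ (Fin n)
local notation "∞'" => ((⊤:ℕ∞) : WithTop ℕ∞)
local notation "sgl" => fun (i : Fin n) => EuclideanSpace.single i (1:ℝ)

lemma hcs_of_zero {α : Type*} [TopologicalSpace α] [T2Space α] (f g : α → ℝ)
    (hg : HasCompactSupport g)
    (h : ∀ x, g x = 0 → f x = 0) : HasCompactSupport f := by
  apply HasCompactSupport.intro hg
  intro x hx
  exact h x (image_eq_zero_of_notMem_tsupport hx)

lemma grad_coord (g : E → ℝ) (x : E) (i : Fin n) :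
    gradient g x i = fderiv ℝ g x (EuclideanSpace.single i 1) := by
  have h2 : inner ℝ (gradient g x) (EuclideanSpace.single i (1:ℝ))
      = fderiv ℝ g x (EuclideanSpace.single i 1) := by
    simp [gradient, InnerProductSpace.toDual_symm_apply]
  rw [EuclideanSpace.inner_single_right] at h2
  simpa using h2

lemma norm_grad_sq (g : E → ℝ) (x : E) :
    ‖gradient g x‖ ^ 2 = ∑ i : Fin n, (fderiv ℝ g x (EuclideanSpace.single i 1)) ^ 2 := by
  have := EuclideanSpace.norm_eq (gradient g x)
  rw [this, Real.sq_sqrt (by positivity)]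
  refine Finset.sum_congr rfl fun i _ => ?_
  rw [← grad_coord]
  simp [sq_abs]

lemma ibp1 (f g : E → ℝ) (hf : ContDiff ℝ ∞' f) (hfc : HasCompactSupport f)
    (hg : ContDiff ℝ ∞' g) (hgc : HasCompactSupport g) (v : E) :
    ∫ x, fderiv ℝ f x v * g x = - ∫ x, f x * fderiv ℝ g x v := by
  obtain ⟨C, hC⟩ := hf.lipschitzWith_of_hasCompactSupport hfc (by simp)
  obtain ⟨D, hD⟩ := hg.lipschitzWith_of_hasCompactSupport hgc (by simp)
  have key := LipschitzWith.integral_lineDeriv_mul_eq (μ := volume) hC hD hgc v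
  have h1 : ∀ x, lineDeriv ℝ f x v = fderiv ℝ f x v := fun x =>
    ((hf.differentiable (by simp)) x).lineDeriv_eq_fderiv
  have h2 : ∀ x, lineDeriv ℝ g x (-v) = - fderiv ℝ g x v := fun x => by
    rw [((hg.differentiable (by simp)) x).lineDeriv_eq_fderiv]; simp
  simp_rw [h1, h2] at key
  rw [key, ← integral_neg]
  congr 1; ext x; ring

lemma lap_eq (w : E → ℝ) (hw : ContDiff ℝ ∞' w) (x : E) :
    lap w x = ∑ i : Fin n, fderiv ℝ (fun y => fderiv ℝ w y (EuclideanSpace.single i 1)) x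
      (EuclideanSpace.single i 1) := by
  unfold lap
  refine Finset.sum_congr rfl fun i _ => ?_
  rw [iteratedFDeriv_two_apply]
  have hd : DifferentiableAt ℝ (fderiv ℝ w) x :=
    (hw.fderiv_right (m := (⊤:ℕ∞)) (by exact_mod_cast le_rfl)).differentiable
      (by simp) x
  rw [fderiv_clm_apply hd (differentiableAt_const _)]
  simp

lemma fderiv_zero_of_nmem (g : E → ℝ) (x : E) (hx : x ∉ tsupport g) : fderiv ℝ g x = 0 := by
  by_contra h
  exact hx (support_fderiv_subset ℝ (Function.mem_support.mpr h))

lemma ibp_lap_cpt (w τ : E → ℝ) (hw : ContDiff ℝ ∞' w) (hwc : HasCompactSupport w)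
    (hτ : ContDiff ℝ ∞' τ) (hτc : HasCompactSupport τ) :
    ∫ x, lap w x * τ x
      = - ∫ x, ∑ i : Fin n, fderiv ℝ w x (EuclideanSpace.single i 1)
          * fderiv ℝ τ x (EuclideanSpace.single i 1) := by
  have hfd : ∀ (i : Fin n), ContDiff ℝ ∞' (fun y => fderiv ℝ w y (EuclideanSpace.single i 1)) :=
    fun i => (hw.fderiv_right (m := (⊤:ℕ∞)) (by exact_mod_cast le_rfl)).clm_apply contDiff_const
  have hfdc : ∀ (i : Fin n),
      HasCompactSupport (fun y => fderiv ℝ w y (EuclideanSpace.single i 1)) := fun i => by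
    apply HasCompactSupport.intro hwc
    intro x hx
    rw [fderiv_zero_of_nmem w x hx]
    simp
  have key : ∀ i : Fin n,
      ∫ x, fderiv ℝ (fun y => fderiv ℝ w y (EuclideanSpace.single i 1)) x
          (EuclideanSpace.single i 1) * τ x
        = - ∫ x, fderiv ℝ w x (EuclideanSpace.single i 1)
            * fderiv ℝ τ x (EuclideanSpace.single i 1) :=
    fun i => ibp1 _ τ (hfd i) (hfdc i) hτ hτc _
  have hpt : (fun x => lap w x * τ x) = fun x =>
      ∑ i : Fin n, fderiv ℝ (fun y => fderiv ℝ w y (EuclideanSpace.single i 1)) x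
        (EuclideanSpace.single i 1) * τ x := by
    funext x; rw [lap_eq w hw, Finset.sum_mul]
  have hint : ∀ i : Fin n, Integrable (fun x =>
      fderiv ℝ (fun y => fderiv ℝ w y (EuclideanSpace.single i 1)) x
        (EuclideanSpace.single i 1) * τ x) := by
    intro i
    apply Continuous.integrable_of_hasCompactSupport
    · exact (((hfd i).fderiv_right (m := (⊤:ℕ∞)) (by exact_mod_cast le_rfl)).clm_apply
        contDiff_const).continuous.mul hτ.continuous
    · exact hcs_of_zero _ τ hτc (fun x hx => by rw [hx, mul_zero])
  have hint2 : ∀ i : Fin n, Integrable (fun x =>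
      fderiv ℝ w x (EuclideanSpace.single i 1) * fderiv ℝ τ x (EuclideanSpace.single i 1)) := by
    intro i
    apply Continuous.integrable_of_hasCompactSupport
    · exact (hfd i).continuous.mul
        ((hτ.fderiv_right (m := (⊤:ℕ∞)) (by exact_mod_cast le_rfl)).clm_apply
          contDiff_const).continuous
    · apply HasCompactSupport.intro hτc
      intro x hx
      rw [fderiv_zero_of_nmem τ x hx]
      simp
  have A : ∫ x, lap w x * τ x = ∑ i : Fin n,
      ∫ x, fderiv ℝ (fun y => fderiv ℝ w y (EuclideanSpace.single i 1)) x
        (EuclideanSpace.single i 1) * τ x := by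
    rw [hpt]; exact integral_finset_sum _ (fun i _ => hint i)
  have B : (∫ x, ∑ i : Fin n, fderiv ℝ w x (EuclideanSpace.single i 1)
      * fderiv ℝ τ x (EuclideanSpace.single i 1)) = ∑ i : Fin n,
      ∫ x, fderiv ℝ w x (EuclideanSpace.single i 1)
        * fderiv ℝ τ x (EuclideanSpace.single i 1) :=
    integral_finset_sum _ (fun i _ => hint2 i)
  rw [A, B, ← Finset.sum_neg_distrib]
  exact Finset.sum_congr rfl (fun i _ => key i)

lemma ibp_lap (w τ : E → ℝ) (hw : ContDiff ℝ ∞' w)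
    (hτ : ContDiff ℝ ∞' τ) (hτc : HasCompactSupport τ) :
    ∫ x, lap w x * τ x
      = - ∫ x, ∑ i : Fin n, fderiv ℝ w x (EuclideanSpace.single i 1)
          * fderiv ℝ τ x (EuclideanSpace.single i 1) := by
  obtain ⟨r, hr0, hr⟩ := hτc.isBounded.subset_ball_lt 0 (0 : E)
  set bump : ContDiffBump (0 : E) := ⟨r, r + 1, hr0, by linarith⟩ with hbump
  set W : E → ℝ := fun x => bump x * w x with hW
  have hWs : ContDiff ℝ ∞' W := bump.contDiff.mul hw
  have hWc : HasCompactSupport W :=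
    hcs_of_zero _ _ bump.hasCompactSupport (fun x hx => by rw [hW]; simp [hx])
  have hball : ∀ x ∈ Metric.ball (0 : E) r, W =ᶠ[nhds x] w := by
    intro x hx
    filter_upwards [Metric.isOpen_ball.mem_nhds hx] with y hy
    have : bump y = 1 := bump.one_of_mem_closedBall (Metric.ball_subset_closedBall hy)
    rw [hW]; simp [this]
  have hfd_eq : ∀ x ∈ Metric.ball (0 : E) r, fderiv ℝ W x = fderiv ℝ w x :=
    fun x hx => (hball x hx).fderiv_eq
  have hlap_eq : ∀ x ∈ Metric.ball (0 : E) r, lap W x = lap w x := by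
    intro x hx
    rw [lap_eq W hWs x, lap_eq w hw x]
    refine Finset.sum_congr rfl fun i _ => ?_
    have : (fun y => fderiv ℝ W y (EuclideanSpace.single i 1))
        =ᶠ[nhds x] (fun y => fderiv ℝ w y (EuclideanSpace.single i 1)) := by
      filter_upwards [Metric.isOpen_ball.mem_nhds hx] with y hy
      rw [hfd_eq y hy]
    rw [this.fderiv_eq]
  have hτ0 : ∀ x, x ∉ Metric.ball (0 : E) r → τ x = 0 := fun x hx =>
    image_eq_zero_of_notMem_tsupport (fun h => hx (hr h))
  have hτ0' : ∀ x, x ∉ Metric.ball (0 : E) r → fderiv ℝ τ x = 0 := by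
    intro x hx
    apply fderiv_zero_of_nmem
    intro h
    exact hx (hr h)
  have e1 : (fun x => lap w x * τ x) = fun x => lap W x * τ x := by
    funext x
    by_cases hx : x ∈ Metric.ball (0 : E) r
    · rw [hlap_eq x hx]
    · rw [hτ0 x hx, mul_zero, mul_zero]
  have e2 : (fun x => ∑ i : Fin n, fderiv ℝ w x (EuclideanSpace.single i 1)
      * fderiv ℝ τ x (EuclideanSpace.single i 1))
    = fun x => ∑ i : Fin n, fderiv ℝ W x (EuclideanSpace.single i 1)
      * fderiv ℝ τ x (EuclideanSpace.single i 1) := by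
    funext x
    by_cases hx : x ∈ Metric.ball (0 : E) r
    · refine Finset.sum_congr rfl fun i _ => ?_
      rw [hfd_eq x hx]
    · rw [hτ0' x hx]
      simp
  rw [e1, e2]
  exact ibp_lap_cpt W τ hWs hWc hτ hτc

lemma fderiv_mul_apply (w φ : E → ℝ) (hw : ContDiff ℝ ∞' w) (hφ : ContDiff ℝ ∞' φ)
    (x v : E) : fderiv ℝ (fun y => w y * φ y) x v
      = fderiv ℝ w x v * φ x + w x * fderiv ℝ φ x v := by
  rw [fderiv_fun_mul ((hw.differentiable (by simp)) x)
    ((hφ.differentiable (by simp)) x)]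
  simp [smul_eq_mul]
  ring

end helpers

/-- The Caccioppoli-type estimate (2.4) in the proof of Lemma 2.1, obtained by
testing the differential inequality (2.3) for `w = u^p` against `wφ²`. -/
theorem stmt5 (n : ℕ) (hn : 1 ≤ n) (p : ℝ) (hp : 1 ≤ p)
    (R : EuclideanSpace ℝ (Fin n) → ℝ) (hR : Continuous R)
    (u : EuclideanSpace ℝ (Fin n) → ℝ) (hu : ContDiff ℝ (⊤ : ℕ∞) u) (hupos : ∀ x, 0 < u x)
    (w : EuclideanSpace ℝ (Fin n) → ℝ) (hw : ContDiff ℝ (⊤ : ℕ∞) w) (hwnonneg : ∀ x, 0 ≤ w x)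
    (hineq : ∀ x, -4 * lap w x + p * R x * w x ≤ 2 * p * w x * Real.log (u x))
    (φ : EuclideanSpace ℝ (Fin n) → ℝ) (hφ : ContDiff ℝ (⊤ : ℕ∞) φ)
    (hφc : HasCompactSupport φ) (hφ01 : ∀ x, 0 ≤ φ x ∧ φ x ≤ 1)
    (hRnonneg : ∀ x ∈ tsupport φ, 0 ≤ R x) :
    4 * (∫ x, ‖gradient (fun y => w y * φ y) x‖ ^ 2) + ∫ x, R x * (w x * φ x) ^ 2
      ≤ 4 * (∫ x, ‖gradient φ x‖ ^ 2 * (w x) ^ 2)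
        + p * ∫ x, (w x * φ x) ^ 2 * Real.log ((u x) ^ 2) := by
  have hw' : ContDiff ℝ ((⊤:ℕ∞) : WithTop ℕ∞) w := hw.of_le (by simp)
  have hφ' : ContDiff ℝ ((⊤:ℕ∞) : WithTop ℕ∞) φ := hφ.of_le (by simp)
  have hu' : ContDiff ℝ ((⊤:ℕ∞) : WithTop ℕ∞) u := hu.of_le (by simp)
  set τ : EuclideanSpace ℝ (Fin n) → ℝ := fun y => w y * (φ y * φ y) with hτdef
  have hτs : ContDiff ℝ ((⊤:ℕ∞) : WithTop ℕ∞) τ := hw'.mul (hφ'.mul hφ')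
  have hτc : HasCompactSupport τ := hcs_of_zero τ φ hφc (fun x hx => by simp [hτdef, hx])
  have hwφs : ContDiff ℝ ((⊤:ℕ∞) : WithTop ℕ∞) (fun y => w y * φ y) := hw'.mul hφ'
  have hwφc : HasCompactSupport (fun y => w y * φ y) :=
    hcs_of_zero _ φ hφc (fun x hx => by simp [hx])
  -- derivative formulas
  have hgd : ∀ (x : EuclideanSpace ℝ (Fin n)) (i : Fin n),
      fderiv ℝ (fun y => w y * φ y) x (EuclideanSpace.single i 1)
        = fderiv ℝ w x (EuclideanSpace.single i 1) * φ x
          + w x * fderiv ℝ φ x (EuclideanSpace.single i 1) :=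
    fun x i => fderiv_mul_apply w φ hw' hφ' x _
  have hτd : ∀ (x : EuclideanSpace ℝ (Fin n)) (i : Fin n),
      fderiv ℝ τ x (EuclideanSpace.single i 1)
        = fderiv ℝ w x (EuclideanSpace.single i 1) * (φ x * φ x)
          + w x * (fderiv ℝ φ x (EuclideanSpace.single i 1) * φ x
            + φ x * fderiv ℝ φ x (EuclideanSpace.single i 1)) := by
    intro x i
    rw [hτdef]
    rw [fderiv_mul_apply w (fun y => φ y * φ y) hw' (hφ'.mul hφ') x _,
      fderiv_mul_apply φ φ hφ' hφ' x _]
  -- pointwise key identity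
  have hkey : ∀ x : EuclideanSpace ℝ (Fin n),
      (∑ i : Fin n, fderiv ℝ w x (EuclideanSpace.single i 1)
          * fderiv ℝ τ x (EuclideanSpace.single i 1))
        = (∑ i : Fin n, fderiv ℝ (fun y => w y * φ y) x (EuclideanSpace.single i 1) ^ 2)
          - (∑ i : Fin n, fderiv ℝ φ x (EuclideanSpace.single i 1) ^ 2) * w x ^ 2 := by
    intro x
    rw [Finset.sum_mul, ← Finset.sum_sub_distrib]
    refine Finset.sum_congr rfl fun i _ => ?_
    rw [hτd x i, hgd x i]
    ring
  -- continuity of coordinate derivatives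
  have hcd : ∀ (g : EuclideanSpace ℝ (Fin n) → ℝ), ContDiff ℝ ((⊤:ℕ∞) : WithTop ℕ∞) g →
      ∀ i : Fin n, Continuous (fun x => fderiv ℝ g x (EuclideanSpace.single i 1)) :=
    fun g hg i => ((hg.fderiv_right (m := (⊤:ℕ∞)) (by exact_mod_cast le_rfl)).clm_apply
      contDiff_const).continuous
  -- integrability
  have intI1 : Integrable (fun x => ∑ i : Fin n,
      fderiv ℝ (fun y => w y * φ y) x (EuclideanSpace.single i 1) ^ 2) := by
    apply Continuous.integrable_of_hasCompactSupport
    · exact continuous_finset_sum _ fun i _ => (hcd _ hwφs i).pow 2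
    · apply HasCompactSupport.intro hwφc
      intro x hx
      rw [fderiv_zero_of_nmem _ x hx]
      simp
  have intI3 : Integrable (fun x => (∑ i : Fin n,
      fderiv ℝ φ x (EuclideanSpace.single i 1) ^ 2) * w x ^ 2) := by
    apply Continuous.integrable_of_hasCompactSupport
    · exact (continuous_finset_sum _ fun i _ => (hcd _ hφ' i).pow 2).mul
        (hw'.continuous.pow 2)
    · apply HasCompactSupport.intro hφc
      intro x hx
      rw [fderiv_zero_of_nmem _ x hx]
      simp
  have intB : Integrable (fun x => R x * (w x * φ x) ^ 2) := by
    apply Continuous.integrable_of_hasCompactSupport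
    · exact hR.mul ((hw'.continuous.mul hφ'.continuous).pow 2)
    · exact hcs_of_zero _ φ hφc (fun x hx => by simp [hx])
  have intD : Integrable (fun x => (w x * φ x) ^ 2 * Real.log (u x ^ 2)) := by
    apply Continuous.integrable_of_hasCompactSupport
    · exact ((hw'.continuous.mul hφ'.continuous).pow 2).mul
        ((hu'.continuous.pow 2).log (fun x => pow_ne_zero 2 (hupos x).ne'))
    · exact hcs_of_zero _ φ hφc (fun x hx => by simp [hx])
  have hlapc : Continuous (lap w) := by
    have he : lap w = fun x => ∑ i : Fin n,
        fderiv ℝ (fun y => fderiv ℝ w y (EuclideanSpace.single i 1)) x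
          (EuclideanSpace.single i 1) := funext (lap_eq w hw')
    rw [he]
    exact continuous_finset_sum _ fun i _ => hcd _
      ((hw'.fderiv_right (m := (⊤:ℕ∞)) (by exact_mod_cast le_rfl)).clm_apply contDiff_const) i
  have int_lap : Integrable (fun x => lap w x * τ x) := by
    apply Continuous.integrable_of_hasCompactSupport
    · exact hlapc.mul hτs.continuous
    · exact hcs_of_zero _ τ hτc (fun x hx => by rw [hx, mul_zero])
  have intL : Integrable (fun x => (-4 * lap w x + p * R x * w x) * τ x) := by
    apply Continuous.integrable_of_hasCompactSupport
    · exact ((continuous_const.mul hlapc).add ((continuous_const.mul hR).mul hw'.continuous)).mul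
        hτs.continuous
    · exact hcs_of_zero _ τ hτc (fun x hx => by rw [hx, mul_zero])
  have intRt : Integrable (fun x => (2 * p * w x * Real.log (u x)) * τ x) := by
    apply Continuous.integrable_of_hasCompactSupport
    · exact ((continuous_const.mul hw'.continuous).mul
        (hu'.continuous.log (fun x => (hupos x).ne'))).mul hτs.continuous
    · exact hcs_of_zero _ τ hτc (fun x hx => by rw [hx, mul_zero])
  -- tested inequality
  have main : ∫ x, (-4 * lap w x + p * R x * w x) * τ x
      ≤ ∫ x, (2 * p * w x * Real.log (u x)) * τ x := by
    apply integral_mono intL intRt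
    intro x
    have h1 := hwnonneg x
    have h2 := (hφ01 x).1
    exact mul_le_mul_of_nonneg_right (hineq x) (by positivity)
  have eL : ∫ x, (-4 * lap w x + p * R x * w x) * τ x
      = -4 * (∫ x, lap w x * τ x) + p * (∫ x, R x * (w x * φ x) ^ 2) := by
    have he : (fun x => (-4 * lap w x + p * R x * w x) * τ x)
        = fun x => (-4) * (lap w x * τ x) + p * (R x * (w x * φ x) ^ 2) := by
      funext x
      simp only [hτdef]
      ring
    rw [he, integral_add (int_lap.const_mul _) (intB.const_mul _), integral_const_mul,
      integral_const_mul]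
  have eIBP : ∫ x, lap w x * τ x
      = -((∫ x, ∑ i : Fin n,
            fderiv ℝ (fun y => w y * φ y) x (EuclideanSpace.single i 1) ^ 2)
          - ∫ x, (∑ i : Fin n, fderiv ℝ φ x (EuclideanSpace.single i 1) ^ 2) * w x ^ 2) := by
    rw [ibp_lap w τ hw' hτs hτc]
    congr 1
    have he : (fun x => ∑ i : Fin n, fderiv ℝ w x (EuclideanSpace.single i 1)
        * fderiv ℝ τ x (EuclideanSpace.single i 1))
      = fun x => (∑ i : Fin n,
            fderiv ℝ (fun y => w y * φ y) x (EuclideanSpace.single i 1) ^ 2)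
          - (∑ i : Fin n, fderiv ℝ φ x (EuclideanSpace.single i 1) ^ 2) * w x ^ 2 :=
      funext hkey
    rw [he, integral_sub intI1 intI3]
  have eR : ∫ x, (2 * p * w x * Real.log (u x)) * τ x
      = p * ∫ x, (w x * φ x) ^ 2 * Real.log (u x ^ 2) := by
    rw [← integral_const_mul]
    congr 1
    funext x
    rw [Real.log_pow]
    simp only [hτdef]
    push_cast
    ring
  have hBnn : 0 ≤ ∫ x, R x * (w x * φ x) ^ 2 := by
    apply integral_nonneg
    intro x
    by_cases hx : φ x = 0
    · simp [hx]
    · have hxs : x ∈ tsupport φ := subset_closure (Function.mem_support.mpr hx)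
      have := hRnonneg x hxs
      positivity
  have hpB : (∫ x, R x * (w x * φ x) ^ 2) ≤ p * ∫ x, R x * (w x * φ x) ^ 2 :=
    le_mul_of_one_le_left hBnn hp
  simp_rw [norm_grad_sq]
  linarith [main, eL, eIBP, eR, hpB]
end

section
/- Let (Ω, μ) be a measure space, let q > 1 be a real number, let u : Ω → ℝ be measurable with u > 0 μ-almost everywhere and ∫ u² dμ ≤ 1, and let g : Ω → ℝ be a nonnegative measurable function such that g², g^{2q/(q−1)}, and g²·ln(u²) are integrable. Then ∫ g²·ln(u²) dμ ≤ ( ∫ g^{2q/(q−1)} dμ )^{(q−1)/q} + q·(ln q − 1)·∫ g² dμ. -/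
open MeasureTheory Real

/-- Pointwise bound: for `t > 0`, `log (t²) ≤ t^{2/q} + q (log q − 1)`. -/
lemma stmt6_pointwise {q t : ℝ} (hq : 1 < q) (ht : 0 < t) :
    Real.log (t ^ 2) ≤ t ^ (2 / q) + q * (Real.log q - 1) := by
  have hq0 : 0 < q := lt_trans one_pos hq
  set s : ℝ := t ^ (2 / q) with hs
  have hs0 : 0 < s := Real.rpow_pos_of_pos ht _
  have hlog : Real.log (t ^ 2) = q * Real.log s := by
    rw [hs, Real.log_rpow ht, Real.log_pow]
    field_simp
    push_cast; ring
  have h1 : Real.log (s / q) ≤ s / q - 1 :=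
    Real.log_le_sub_one_of_pos (div_pos hs0 hq0)
  have h2 : Real.log s = Real.log (s / q) + Real.log q := by
    rw [Real.log_div hs0.ne' hq0.ne']; ring
  have h3 : Real.log s ≤ s / q - 1 + Real.log q := by rw [h2]; linarith
  calc Real.log (t ^ 2) = q * Real.log s := hlog
    _ ≤ q * (s / q - 1 + Real.log q) := by
        exact mul_le_mul_of_nonneg_left h3 hq0.le
    _ = s + q * (Real.log q - 1) := by field_simp; ring

/-- The entropy-domination step in the proof of Lemma 2.1: combining the
pointwise bound `ln(u²) ≤ u^{2/q} + q(ln q − 1)` with Hölder's inequality. -/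
theorem stmt6 {Ω : Type*} [MeasurableSpace Ω] (μ : Measure Ω)
    (q : ℝ) (hq : 1 < q)
    (u : Ω → ℝ) (hu : Measurable u) (hupos : ∀ᵐ x ∂μ, 0 < u x)
    (huInt : Integrable (fun x => (u x) ^ 2) μ)
    (huL2 : ∫ x, (u x) ^ 2 ∂μ ≤ 1)
    (g : Ω → ℝ) (hg : Measurable g) (hgnonneg : ∀ x, 0 ≤ g x)
    (hg2 : Integrable (fun x => (g x) ^ 2) μ)
    (hgq : Integrable (fun x => g x ^ (2 * q / (q - 1))) μ)
    (hglog : Integrable (fun x => (g x) ^ 2 * Real.log ((u x) ^ 2)) μ) :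
    ∫ x, (g x) ^ 2 * Real.log ((u x) ^ 2) ∂μ
      ≤ (∫ x, g x ^ (2 * q / (q - 1)) ∂μ) ^ ((q - 1) / q)
        + q * (Real.log q - 1) * ∫ x, (g x) ^ 2 ∂μ := by
  have hq0 : 0 < q := lt_trans one_pos hq
  have hq1 : 0 < q - 1 := sub_pos.mpr hq
  set p : ℝ := q / (q - 1) with hp_def
  have hpq : p.HolderConjugate q :=
    (Real.HolderConjugate.conjExponent hq).symm
  have hp0 : 0 < p := hpq.pos
  -- Memℒp for g²
  have hgmem : MemLp (fun x => (g x) ^ 2) (ENNReal.ofReal p) μ := by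
    rw [← memLp_norm_rpow_iff (q := ENNReal.ofReal p)
      (hg.pow_const 2).aestronglyMeasurable
      (by simp [ENNReal.ofReal_eq_zero, not_le, hp0]) ENNReal.ofReal_ne_top,
      ENNReal.div_self (by simp [ENNReal.ofReal_eq_zero, not_le, hp0]) ENNReal.ofReal_ne_top,
      memLp_one_iff_integrable]
    refine hgq.congr (Filter.Eventually.of_forall fun x => ?_)
    show g x ^ (2 * q / (q - 1)) = ‖g x ^ 2‖ ^ (ENNReal.ofReal p).toReal
    rw [Real.norm_of_nonneg (sq_nonneg _), ENNReal.toReal_ofReal hp0.le,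
      ← Real.rpow_natCast (g x) 2, ← Real.rpow_mul (hgnonneg x)]
    norm_num [hp_def, mul_div_assoc]
  -- Memℒp for u^{2/q}
  have humem : MemLp (fun x => u x ^ (2 / q)) (ENNReal.ofReal q) μ := by
    rw [← memLp_norm_rpow_iff (q := ENNReal.ofReal q)
      (show Measurable fun x => u x ^ (2 / q) by fun_prop).aestronglyMeasurable
      (by simp [ENNReal.ofReal_eq_zero, not_le, hq0]) ENNReal.ofReal_ne_top,
      ENNReal.div_self (by simp [ENNReal.ofReal_eq_zero, not_le, hq0]) ENNReal.ofReal_ne_top,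
      memLp_one_iff_integrable]
    refine huInt.congr ?_
    filter_upwards [hupos] with x hx
    show u x ^ 2 = ‖u x ^ (2 / q)‖ ^ (ENNReal.ofReal q).toReal
    rw [ENNReal.toReal_ofReal hq0.le,
      Real.norm_of_nonneg (Real.rpow_nonneg hx.le _),
      ← Real.rpow_mul hx.le, div_mul_cancel₀ _ hq0.ne',
      show (2:ℝ) = ((2:ℕ):ℝ) by norm_num, Real.rpow_natCast]
  -- integrability of the product
  have hprod : Integrable (fun x => (g x) ^ 2 * u x ^ (2 / q)) μ := by
    rw [← memLp_one_iff_integrable]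
    haveI : ENNReal.HolderTriple (ENNReal.ofReal p) (ENNReal.ofReal q) 1 :=
      ⟨by rw [inv_one, hpq.inv_add_inv_ennreal]⟩
    exact MemLp.smul humem hgmem
  -- Hölder
  have holder := integral_mul_le_Lp_mul_Lq_of_nonneg hpq
    (Filter.Eventually.of_forall fun x => sq_nonneg (g x))
    (hupos.mono fun x hx => Real.rpow_nonneg hx.le _) hgmem humem
  have hEq1 : ∫ x, ((g x) ^ 2) ^ p ∂μ = ∫ x, g x ^ (2 * q / (q - 1)) ∂μ := by
    refine integral_congr_ae (Filter.Eventually.of_forall fun x => ?_)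
    show ((g x) ^ 2) ^ p = g x ^ (2 * q / (q - 1))
    rw [← Real.rpow_natCast (g x) 2, ← Real.rpow_mul (hgnonneg x)]
    norm_num [hp_def, mul_div_assoc]
  have hEq2 : ∫ x, (u x ^ (2 / q)) ^ q ∂μ = ∫ x, (u x) ^ 2 ∂μ := by
    refine integral_congr_ae ?_
    filter_upwards [hupos] with x hx
    show (u x ^ (2 / q)) ^ q = u x ^ 2
    rw [← Real.rpow_mul hx.le, div_mul_cancel₀ _ hq0.ne',
      show (2:ℝ) = ((2:ℕ):ℝ) by norm_num, Real.rpow_natCast]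
  have hInt2nonneg : 0 ≤ ∫ x, (u x ^ (2 / q)) ^ q ∂μ :=
    integral_nonneg_of_ae (hupos.mono fun x hx =>
      Real.rpow_nonneg (Real.rpow_nonneg hx.le _) _)
  have hfac : (∫ x, (u x ^ (2 / q)) ^ q ∂μ) ^ (1 / q) ≤ 1 :=
    Real.rpow_le_one hInt2nonneg (by rw [hEq2]; exact huL2) (by positivity)
  have hXnonneg : 0 ≤ (∫ x, ((g x) ^ 2) ^ p ∂μ) ^ (1 / p) :=
    Real.rpow_nonneg (integral_nonneg fun x => Real.rpow_nonneg (sq_nonneg _) _) _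
  have holder' : ∫ x, (g x) ^ 2 * u x ^ (2 / q) ∂μ
      ≤ (∫ x, g x ^ (2 * q / (q - 1)) ∂μ) ^ ((q - 1) / q) := by
    calc ∫ x, (g x) ^ 2 * u x ^ (2 / q) ∂μ
        ≤ (∫ x, ((g x) ^ 2) ^ p ∂μ) ^ (1 / p) * (∫ x, (u x ^ (2 / q)) ^ q ∂μ) ^ (1 / q) :=
          holder
      _ ≤ (∫ x, ((g x) ^ 2) ^ p ∂μ) ^ (1 / p) * 1 :=
          mul_le_mul_of_nonneg_left hfac hXnonneg
      _ = (∫ x, g x ^ (2 * q / (q - 1)) ∂μ) ^ ((q - 1) / q) := by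
          rw [mul_one, hEq1, hp_def, one_div_div]
  have hmono : ∫ x, (g x) ^ 2 * Real.log ((u x) ^ 2) ∂μ
      ≤ ∫ x, ((g x) ^ 2 * u x ^ (2 / q) + q * (Real.log q - 1) * (g x) ^ 2) ∂μ := by
    refine integral_mono_ae hglog (hprod.add (hg2.const_mul _)) ?_
    filter_upwards [hupos] with x hx
    calc (g x) ^ 2 * Real.log ((u x) ^ 2)
        ≤ (g x) ^ 2 * (u x ^ (2 / q) + q * (Real.log q - 1)) :=
          mul_le_mul_of_nonneg_left (stmt6_pointwise hq hx) (sq_nonneg _)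
      _ = (g x) ^ 2 * u x ^ (2 / q) + q * (Real.log q - 1) * (g x) ^ 2 := by ring
  rw [integral_add hprod (hg2.const_mul _), MeasureTheory.integral_const_mul] at hmono
  linarith
end
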